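/- arXiv:2205.12139 — 2 statements merged into one kernel-verified Lean document; each statement's English description precedes it below -/
import Mathlib

section
/- Let f be UPP with parameters (T_f, d_f, c_f) and g be ultimately affine with slope ρ_g > 0: g(t) = g(T) + ρ_g·(t − T) for all t ≥ T, where T := max{g↓(T_f), T_g^a}. Then h = f ∘ g satisfies h(t + k·(d_f/ρ_g)) = h(t) + k·c_f for all t ≥ T and k ∈ ℕ; i.e., h is UPP with period d_f/ρ_g and height c_f. -/
/-- Lower pseudo-inverse of g : ℚ≥0 → ℚ, as a real number:
g↓(y) = inf { x ≥ 0 | g(x) ≥ y }. -/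
noncomputable def lpiQ (g : ℚ → ℚ) (y : ℚ) : ℝ :=
  sInf {x : ℝ | ∃ q : ℚ, x = (q : ℝ) ∧ 0 ≤ q ∧ y ≤ g q}

/-!
Beyond `max (g↓(T_f)) T_g^a` the function `g` is affine of slope `ρ_g`, so a shift of `t` by
`k·d_f/ρ_g` shifts `g t` by exactly `k·d_f`. It remains to see that `g t ≥ T_f` there: otherwise
every `q ≥ 0` with `g q ≥ T_f` lies beyond `t` (monotonicity), hence at least `(T_f - g t)/ρ_g`
beyond `t` (affinity), which would push `g↓(T_f)` strictly above `t`.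
-/

open Filter

def IsUltimatelyAffine {α : Type*} [Field α] [LinearOrder α] (g : α → α) (T ρ : α) : Prop :=
  ∀ t, T ≤ t → g t = g T + ρ * (t - T)

namespace IsUltimatelyAffine

variable {α : Type*} [Field α] [LinearOrder α] {g : α → α} {T ρ : α}

theorem apply_eq_add (hg : IsUltimatelyAffine g T ρ) {s t : α} (hs : T ≤ s) (ht : T ≤ t) :
    g t = g s + ρ * (t - s) := by
  rw [hg t ht, hg s hs]
  ring

variable [IsStrictOrderedRing α]

theorem apply_add_nat_mul_div (hg : IsUltimatelyAffine g T ρ) (hρ : 0 < ρ) {t d : α}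
    (ht : T ≤ t) (hd : 0 ≤ d) (k : ℕ) : g (t + k * (d / ρ)) = g t + k * d := by
  have hshift : 0 ≤ (k : α) * (d / ρ) := by positivity
  rw [hg.apply_eq_add ht (by linarith)]
  field_simp
  ring

theorem tendsto_atTop (hg : IsUltimatelyAffine g T ρ) (hρ : 0 < ρ) :
    Tendsto g atTop atTop := by
  have haffine : Tendsto (fun t => g T + ρ * (t - T)) atTop atTop := by
    refine tendsto_atTop_add_const_left _ _ (Tendsto.const_mul_atTop hρ ?_)
    simpa only [sub_eq_add_neg, id] using tendsto_atTop_add_const_right atTop (-T) tendsto_id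
  exact haffine.congr' <| (eventually_ge_atTop T).mono fun t ht => (hg t ht).symm

end IsUltimatelyAffine

theorem IsUltimatelyAffine.lt_lpiQ_of_apply_lt {g : ℚ → ℚ} {T ρ y t : ℚ}
    (hg : IsUltimatelyAffine g T ρ) (hρ : 0 < ρ) (hmono : MonotoneOn g (Set.Ici 0))
    (ht : T ≤ t) (hgt : g t < y) : (t : ℝ) < lpiQ g y := by
  set ε := (y - g t) / ρ
  have hε : 0 < ε := div_pos (by linarith) hρ
  have hne : {x : ℝ | ∃ q : ℚ, x = (q : ℝ) ∧ 0 ≤ q ∧ y ≤ g q}.Nonempty := by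
    obtain ⟨q, hyq, hq⟩ :=
      (((hg.tendsto_atTop hρ).eventually_ge_atTop y).and (eventually_ge_atTop 0)).exists
    exact ⟨q, q, rfl, hq, hyq⟩
  have hbound : ((t + ε : ℚ) : ℝ) ≤ lpiQ g y := by
    refine le_csInf hne ?_
    rintro _ ⟨q, rfl, hq, hyq⟩
    have htq : t < q := lt_of_not_ge fun hqt =>
      (hgt.trans_le hyq).not_ge (hmono hq (hq.trans hqt) hqt)
    have hgq := hg.apply_eq_add ht (ht.trans htq.le)
    have hεq : ε ≤ q - t := by
      rw [div_le_iff₀' hρ]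
      linarith
    exact_mod_cast (by linarith : t + ε ≤ q)
  have hlt : (t : ℝ) < ((t + ε : ℚ) : ℝ) := by exact_mod_cast lt_add_of_pos_right t hε
  exact hlt.trans_le hbound

theorem comp_upp_g_ua_general (f g : ℚ → ℚ) (Tf df cf Tga ρg : ℚ)
    (hdf : 0 < df) (hρg : 0 < ρg)
    (hgmono : ∀ x y : ℚ, 0 ≤ x → x ≤ y → g x ≤ g y)
    (hf : ∀ x : ℚ, Tf ≤ x → ∀ k : ℕ, f (x + (k : ℚ) * df) = f x + (k : ℚ) * cf)
    (hg : ∀ t : ℚ, Tga ≤ t → g t = g Tga + ρg * (t - Tga)) :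
    ∀ t : ℚ, max (lpiQ g Tf) ((Tga : ℝ)) ≤ (t : ℝ) → ∀ k : ℕ,
      f (g (t + (k : ℚ) * (df / ρg))) = f (g t) + (k : ℚ) * cf := by
  intro t ht k
  have hua : IsUltimatelyAffine g Tga ρg := hg
  have hmono : MonotoneOn g (Set.Ici 0) := fun x hx _ _ hxy => hgmono x _ hx hxy
  have hTt : Tga ≤ t := by exact_mod_cast (le_max_right _ _).trans ht
  have hTf : Tf ≤ g t := le_of_not_gt fun hlt =>
    (hua.lt_lpiQ_of_apply_lt hρg hmono hTt hlt).not_ge ((le_max_left _ _).trans ht)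
  rw [hua.apply_add_nat_mul_div hρg hTt hdf.le, hf _ hTf]

/-- if f is UPP with parameters (T_f, d_f, c_f) and g is
non-decreasing ultimately affine with slope ρ_g > 0, then h = f ∘ g is UPP with
period d_f/ρ_g and height c_f from T = max{g↓(T_f), T_g^a}. -/
theorem comp_upp_g_ua (f g : ℚ → ℚ) (Tf df cf Tga ρg : ℚ)
    (hTf : 0 ≤ Tf) (hTga : 0 ≤ Tga) (hdf : 0 < df) (hρg : 0 < ρg)
    (hgnn : ∀ t : ℚ, 0 ≤ t → 0 ≤ g t)
    (hgmono : ∀ x y : ℚ, 0 ≤ x → x ≤ y → g x ≤ g y)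
    (hf : ∀ x : ℚ, Tf ≤ x → ∀ k : ℕ, f (x + (k : ℚ) * df) = f x + (k : ℚ) * cf)
    (hg : ∀ t : ℚ, Tga ≤ t → g t = g Tga + ρg * (t - Tga)) :
    ∀ t : ℚ, max (lpiQ g Tf) ((Tga : ℝ)) ≤ (t : ℝ) → ∀ k : ℕ,
      f (g (t + (k : ℚ) * (df / ρg))) = f (g t) + (k : ℚ) * cf :=
  comp_upp_g_ua_general f g Tf df cf Tga ρg hdf hρg hgmono hf hg
end

section
/- Let f and g be ultimately affine with slopes ρ_f, ρ_g, g non-negative, non-decreasing and finite. Then h = f ∘ g is ultimately affine with slope ρ_f·ρ_g and transient start T_h^a = max{g↓(T_f^a), T_g^a}: h(t) = h(T_h^a) + ρ_f·ρ_g·(t − T_h^a) for all t ≥ T_h^a. -/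
/-- Lower pseudo-inverse of g : ℝ≥0 → ℝ, valued in EReal (inf ∅ = +∞):
g↓(y) = inf { x ≥ 0 | g(x) ≥ y }. -/
noncomputable def lpiE (g : ℝ → ℝ) (y : ℝ) : EReal :=
  sInf ((fun x : ℝ => (x : EReal)) '' {x | 0 ≤ x ∧ y ≤ g x})

/-- if f and g are ultimately affine with slopes ρ_f, ρ_g, and g is
non-negative, non-decreasing and finite, then h = f ∘ g is ultimately affine with
slope ρ_f·ρ_g and transient start T_h^a = max{g↓(T_f^a), T_g^a}. -/
theorem comp_ua_ua (f g : ℝ → ℝ) (Tfa Tga ρf ρg : ℝ) (hTfa : 0 ≤ Tfa) (hTga : 0 ≤ Tga)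
    (hgnn : ∀ t : ℝ, 0 ≤ t → 0 ≤ g t)
    (hgmono : MonotoneOn g (Set.Ici 0))
    (hf : ∀ x : ℝ, Tfa ≤ x → f x = f Tfa + ρf * (x - Tfa))
    (hg : ∀ t : ℝ, Tga ≤ t → g t = g Tga + ρg * (t - Tga)) :
    ∀ Tha : ℝ, (Tha : EReal) = max (lpiE g Tfa) ((Tga : EReal)) →
      ∀ t : ℝ, Tha ≤ t → f (g t) = f (g Tha) + ρf * ρg * (t - Tha) := by
  intro Tha hTha t ht
  -- slope of g is nonnegative
  have hρg : 0 ≤ ρg := by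
    have h1 := hg (Tga + 1) (by linarith)
    have h2 := hgmono (Set.mem_Ici.2 hTga) (Set.mem_Ici.2 (by linarith : (0:ℝ) ≤ Tga + 1))
      (by linarith)
    nlinarith
  have hTga_le : Tga ≤ Tha := by
    have h : (Tga : EReal) ≤ (Tha : EReal) := by rw [hTha]; exact le_max_right _ _
    exact_mod_cast h
  have hTha0 : 0 ≤ Tha := hTga.trans hTga_le
  have hle : lpiE g Tfa ≤ (Tha : EReal) := by rw [hTha]; exact le_max_left _ _
  -- key step: Tfa ≤ g Tha
  have hkey : Tfa ≤ g Tha := by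
    by_contra hlt
    push_neg at hlt
    rcases lt_or_eq_of_le hρg with hρ | hρ
    · set δ := (Tfa - g Tha) / ρg with hδ
      have hδpos : 0 < δ := div_pos (by linarith) hρ
      have hρδ : ρg * δ = Tfa - g Tha := by rw [hδ]; exact mul_div_cancel₀ _ hρ.ne'
      have hbound : ((Tha + δ : ℝ) : EReal) ≤ lpiE g Tfa := by
        apply le_sInf
        rintro y ⟨x, ⟨hx0, hxg⟩, rfl⟩
        have : Tha + δ ≤ x := by
          by_contra hxlt
          push_neg at hxlt
          rcases le_or_gt x Tha with hc | hc
          · have := hgmono (Set.mem_Ici.2 hx0) (Set.mem_Ici.2 hTha0) hc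
            linarith
          · have hgx := hg x (by linarith)
            have hgT := hg Tha hTga_le
            nlinarith
        exact EReal.coe_le_coe_iff.mpr this
      have : ((Tha + δ : ℝ) : EReal) ≤ ((Tha : ℝ) : EReal) := hbound.trans hle
      have : Tha + δ ≤ Tha := by exact_mod_cast this
      linarith
    · -- ρg = 0 : the set is empty
      have hempty : {x : ℝ | 0 ≤ x ∧ Tfa ≤ g x} = ∅ := by
        ext x
        simp only [Set.mem_setOf_eq, Set.mem_empty_iff_false, iff_false, not_and]
        intro hx0 hxg
        rcases le_or_gt x Tha with hc | hc
        · have := hgmono (Set.mem_Ici.2 hx0) (Set.mem_Ici.2 hTha0) hc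
          linarith
        · have hgx := hg x (by linarith)
          have hgT := hg Tha hTga_le
          nlinarith
      rw [lpiE, hempty] at hle
      simp at hle
  -- main computation
  have hgt := hg t (hTga_le.trans ht)
  have hgT := hg Tha hTga_le
  have hgtT : g t = g Tha + ρg * (t - Tha) := by linarith [hgt, hgT]; 
  have hgt_ge : Tfa ≤ g t := by nlinarith
  have h1 := hf (g t) hgt_ge
  have h2 := hf (g Tha) hkey
  rw [h1, h2, hgtT]
  ring
end
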